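/- arXiv:2111.03322 — 2 statements merged into one kernel-verified Lean document; each statement's English description precedes it below -/
import Mathlib

section
/- Let (S, Δ) be a transition system, let pred(R) = {s | ∃ r ∈ R, s → r} and pred*(R) = {s | ∃ r ∈ R, s →* r}. Suppose F : Set S → Set S is a monotone operator satisfying R ∪ pred(R) ⊆ F(R) ⊆ R ∪ pred*(R) for all R. Then for every R ⊆ S, the union of the iterates R, F(R), F(F(R)), … equals R ∪ pred*(R). -/
def pred {S : Type*} (Δ : S → S → Prop) (R : Set S) : Set S :=
  {s | ∃ r ∈ R, Δ s r}

def predStar {S : Type*} (Δ : S → S → Prop) (R : Set S) : Set S :=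
  {s | ∃ r ∈ R, Relation.ReflTransGen Δ s r}

/-- Iterating a monotone operator sandwiched between `R ∪ pred R` and
`R ∪ pred* R` computes exactly `R ∪ pred* R`. -/
theorem iterate_sandwiched_operator {S : Type*} (Δ : S → S → Prop)
    (F : Set S → Set S) (hmono : ∀ R R' : Set S, R ⊆ R' → F R ⊆ F R')
    (hsandwich : ∀ R : Set S, R ∪ pred Δ R ⊆ F R ∧ F R ⊆ R ∪ predStar Δ R)
    (R : Set S) :
    (⋃ n : ℕ, F^[n] R) = R ∪ predStar Δ R := by
  apply Set.Subset.antisymm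
  · apply Set.iUnion_subset
    intro n
    induction n with
    | zero => exact Set.subset_union_left
    | succ n ih =>
      rw [Function.iterate_succ_apply']
      refine (hsandwich _).2.trans ?_ |>.trans (le_refl _)
      intro s hs
      rcases hs with hs | ⟨r, hr, hsr⟩
      · exact ih hs
      · rcases ih hr with hr' | ⟨t, ht, hrt⟩
        · exact Or.inr ⟨r, hr', hsr⟩
        · exact Or.inr ⟨t, ht, hsr.trans hrt⟩
  · intro s hs
    rcases hs with hs | ⟨r, hr, hsr⟩
    · exact Set.mem_iUnion.2 ⟨0, hs⟩
    · induction hsr using Relation.ReflTransGen.head_induction_on with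
      | refl => exact Set.mem_iUnion.2 ⟨0, hr⟩
      | head h _ ih =>
        rcases Set.mem_iUnion.1 ih with ⟨n, hn⟩
        refine Set.mem_iUnion.2 ⟨n + 1, ?_⟩
        rw [Function.iterate_succ_apply']
        exact (hsandwich _).1 (Or.inr ⟨_, hn, h⟩)
end

section
/- The refined order ≲̃₀ on configurations of a disjunctive counter system, defined by (q_A, c) ≲̃₀ (q'_A, d) iff q_A = q'_A, c ≤ d componentwise, and for every i, c(i) = 0 iff d(i) = 0, is compatible with the transition relation: if (q_A, c) → (q'_A, c') and (q_A, c) ≲̃₀ (q_A, d), then there exists d' reachable from (q_A, d) by finitely many transition steps (all applications of the same local transition) with (q'_A, c') ≲̃₀ (q'_A, d'). Moreover, if the B-transition taken is (q_i, g, q_j) with c(i) = 1 and d(i) = b > 1, then executing the transition b times from (q_A, d) yields such a d'. -/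
def guardSat {QA QB : Type*} (qA : QA) (c : QB → ℕ) (q : QA ⊕ QB)
    (g : Set (QA ⊕ QB)) : Prop :=
  (q = Sum.inl qA ∧ ∃ qi : QB, Sum.inr qi ∈ g ∧ 1 ≤ c qi) ∨
  (∃ qb : QB, q = Sum.inr qb ∧ 1 ≤ c qb ∧ Sum.inl qA ∈ g) ∨
  (∃ qb qi : QB, q = Sum.inr qb ∧ 1 ≤ c qb ∧ Sum.inr qi ∈ g ∧ qi ≠ qb ∧ 1 ≤ c qi) ∨
  (∃ qb : QB, q = Sum.inr qb ∧ Sum.inr qb ∈ g ∧ 2 ≤ c qb)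

def moveB {QB : Type*} [DecidableEq QB] (qi qj : QB) (c : QB → ℕ) : QB → ℕ :=
  fun q => c q - (if q = qi then 1 else 0) + (if q = qj then 1 else 0)

def Step {QA QB : Type*} [DecidableEq QB]
    (δA : Set (QA × Set (QA ⊕ QB) × QA)) (δB : Set (QB × Set (QA ⊕ QB) × QB))
    (s s' : QA × (QB → ℕ)) : Prop :=
  (∃ t ∈ δA, t.1 = s.1 ∧ guardSat s.1 s.2 (Sum.inl t.1) t.2.1 ∧ s' = (t.2.2, s.2)) ∨
  (∃ t ∈ δB, 1 ≤ s.2 t.1 ∧ guardSat s.1 s.2 (Sum.inr t.1) t.2.1 ∧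
    s' = (s.1, moveB t.1 t.2.2 s.2))

/-- A step taken by a `B`-process using the specific local transition `t`. -/
def StepB {QA QB : Type*} [DecidableEq QB]
    (δB : Set (QB × Set (QA ⊕ QB) × QB)) (t : QB × Set (QA ⊕ QB) × QB)
    (s s' : QA × (QB → ℕ)) : Prop :=
  t ∈ δB ∧ 1 ≤ s.2 t.1 ∧ guardSat s.1 s.2 (Sum.inr t.1) t.2.1 ∧
    s' = (s.1, moveB t.1 t.2.2 s.2)

/-- `iterRel r n a b`: `b` is reachable from `a` by exactly `n` `r`-steps. -/
def iterRel {α : Type*} (r : α → α → Prop) : ℕ → α → α → Prop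
  | 0 => Eq
  | n + 1 => fun a c => ∃ b, r a b ∧ iterRel r n b c

/-- The refined zero-pattern order on counters. -/
def le0 {QB : Type*} (c d : QB → ℕ) : Prop :=
  (∀ i, c i ≤ d i) ∧ ∀ i, c i = 0 ↔ d i = 0


lemma iterRel_snoc {α : Type*} (r : α → α → Prop) :
    ∀ (n : ℕ) {a b c : α}, iterRel r n a b → r b c → iterRel r (n + 1) a c := by
  intro n
  induction n with
  | zero => intro a b c h h'; cases h; exact ⟨c, h', rfl⟩
  | succ n ih =>
    rintro a b c ⟨x, hax, hx⟩ h'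
    exact ⟨x, hax, ih hx h'⟩

lemma stepB_step {QA QB : Type*} [DecidableEq QB]
    (δA : Set (QA × Set (QA ⊕ QB) × QA)) (δB : Set (QB × Set (QA ⊕ QB) × QB))
    (t : QB × Set (QA ⊕ QB) × QB) {s s' : QA × (QB → ℕ)} :
    StepB δB t s s' → Step δA δB s s' := fun h =>
  Or.inr ⟨t, h.1, h.2.1, h.2.2.1, h.2.2.2⟩

lemma iterRel_rtg {QA QB : Type*} [DecidableEq QB]
    (δA : Set (QA × Set (QA ⊕ QB) × QA)) (δB : Set (QB × Set (QA ⊕ QB) × QB))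
    (t : QB × Set (QA ⊕ QB) × QB) :
    ∀ (n : ℕ) {s s' : QA × (QB → ℕ)}, iterRel (StepB δB t) n s s' →
      Relation.ReflTransGen (Step δA δB) s s' := by
  intro n
  induction n with
  | zero => intro s s' h; cases h; rfl
  | succ n ih =>
    rintro s s' ⟨x, hx, h⟩
    exact Relation.ReflTransGen.head (stepB_step δA δB t hx) (ih h)

lemma guardSat_mono {QA QB : Type*} (qA : QA) {c d : QB → ℕ}
    (h : ∀ i, c i ≤ d i) (q : QA ⊕ QB) (g : Set (QA ⊕ QB)) :
    guardSat qA c q g → guardSat qA d q g := by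
  rintro (⟨hq, qi, hig, h1⟩ | ⟨qb, hq, h1, hA⟩ | ⟨qb, ql, hq, h1, hlg, hne, hl⟩ |
      ⟨qb, hq, hbg, h2⟩)
  · exact Or.inl ⟨hq, qi, hig, le_trans h1 (h qi)⟩
  · exact Or.inr (Or.inl ⟨qb, hq, le_trans h1 (h qb), hA⟩)
  · exact Or.inr (Or.inr (Or.inl ⟨qb, ql, hq, le_trans h1 (h qb), hlg, hne,
      le_trans hl (h ql)⟩))
  · exact Or.inr (Or.inr (Or.inr ⟨qb, hq, hbg, le_trans h2 (h qb)⟩))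

lemma iter_moveB {QA QB : Type*} [DecidableEq QB]
    (δB : Set (QB × Set (QA ⊕ QB) × QB)) (t : QB × Set (QA ⊕ QB) × QB)
    (ht : t ∈ δB) (qA : QA) (d : QB → ℕ)
    (hg : ∀ e : QB → ℕ, 1 ≤ e t.1 → (∀ q, q ≠ t.1 → d q ≤ e q) →
      guardSat qA e (Sum.inr t.1) t.2.1) :
    ∀ k, k ≤ d t.1 →
      iterRel (StepB δB t) k (qA, d)
        (qA, fun q => d q - (if q = t.1 then k else 0) + (if q = t.2.2 then k else 0)) := by
  intro k
  induction k with
  | zero =>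
    intro _
    show (qA, d) = _
    refine Prod.ext rfl (funext fun q => ?_)
    simp
  | succ k ih =>
    intro hk
    refine iterRel_snoc _ k (ih (Nat.le_of_succ_le hk)) ?_
    have h1 : 1 ≤ d t.1 - (if t.1 = t.1 then k else 0) +
        (if t.1 = t.2.2 then k else 0) := by
      split_ifs <;> omega
    refine ⟨ht, h1, hg _ h1 ?_, ?_⟩
    · intro q hq
      show d q ≤ d q - (if q = t.1 then k else 0) + (if q = t.2.2 then k else 0)
      rw [if_neg hq]
      split_ifs <;> omega
    · refine Prod.ext rfl (funext fun q => ?_)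
      show d q - (if q = t.1 then k + 1 else 0) + (if q = t.2.2 then k + 1 else 0) = _
      simp only [moveB]
      rcases eq_or_ne q t.1 with rfl | e1
      · rcases eq_or_ne t.1 t.2.2 with e2 | e2
        · simp [← e2] <;> omega
        · simp [e2] <;> omega
      · rcases eq_or_ne q t.2.2 with rfl | e2
        · simp [e1] <;> omega
        · simp [e1, e2] <;> omega

lemma key_lemma {QA QB : Type*} [DecidableEq QB]
    (δB : Set (QB × Set (QA ⊕ QB) × QB)) (t : QB × Set (QA ⊕ QB) × QB)
    (qA : QA) (c c' d : QB → ℕ) (b : ℕ)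
    (hsb : StepB δB t (qA, c) (qA, c')) (hc1 : c t.1 = 1) (hdb : d t.1 = b)
    (hle : le0 c d) :
    ∃ d', iterRel (StepB δB t) b (qA, d) (qA, d') ∧ le0 c' d' := by
  obtain ⟨ht, hc, hg, heq⟩ := hsb
  replace hc : 1 ≤ c t.1 := hc
  have hcd : c' = moveB t.1 t.2.2 c := congrArg Prod.snd heq
  have hg' : ∀ e : QB → ℕ, 1 ≤ e t.1 → (∀ q, q ≠ t.1 → d q ≤ e q) →
      guardSat qA e (Sum.inr t.1) t.2.1 := by
    intro e he1 he2
    rcases hg with ⟨h, -⟩ | ⟨qb, hqb, -, hA⟩ | ⟨qb, ql, hqb, -, hlg, hne, hl⟩ |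
        ⟨qb, hqb, -, h2⟩
    · exact absurd h (by simp)
    · injection hqb with h; subst h
      exact Or.inr (Or.inl ⟨t.1, rfl, he1, hA⟩)
    · injection hqb with h; subst h
      refine Or.inr (Or.inr (Or.inl ⟨t.1, ql, rfl, he1, hlg, hne, ?_⟩))
      exact le_trans (le_trans hl (hle.1 ql)) (he2 ql hne)
    · injection hqb with h; subst h
      replace h2 : 2 ≤ c t.1 := h2
      omega
  have hiter := iter_moveB δB t ht qA d hg' b hdb.ge
  refine ⟨_, hiter, ?_, ?_⟩ <;> intro q <;>
      have h1 := hle.1 q <;> have h2 := hle.2 q <;> have h3 := hle.1 t.1 <;>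
      rw [hcd] <;> simp only [moveB] <;>
      rcases eq_or_ne q t.1 with rfl | e1
  · rcases eq_or_ne t.1 t.2.2 with e2 | e2
    · simp [← e2] <;> omega
    · simp [e2] <;> omega
  · rcases eq_or_ne q t.2.2 with rfl | e2
    · simp [e1] <;> omega
    · simp [e1, e2] <;> omega
  · rcases eq_or_ne t.1 t.2.2 with e2 | e2
    · simp [← e2] <;> omega
    · simp [e2] <;> omega
  · rcases eq_or_ne q t.2.2 with rfl | e2
    · simp [e1] <;> omega
    · simp [e1, e2] <;> omega

/-- The refined order `≲̃₀` is compatible with the counter-system transitions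
(via finitely many applications of the same transition); moreover, if the
`B`-transition `t` is taken with `c t.1 = 1` and `d t.1 = b > 1`, then
executing `t` exactly `b` times from `(qA, d)` yields a matching successor. -/
theorem refined_order_compatible {QA QB : Type*} [DecidableEq QB]
    (δA : Set (QA × Set (QA ⊕ QB) × QA)) (δB : Set (QB × Set (QA ⊕ QB) × QB))
    (hδB : ∀ t ∈ δB, t.2.1 ≠ {Sum.inr t.1}) :
    (∀ (qA qA' : QA) (c c' d : QB → ℕ),
      Step δA δB (qA, c) (qA', c') → le0 c d →
      ∃ d', Relation.ReflTransGen (Step δA δB) (qA, d) (qA', d') ∧ le0 c' d') ∧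
    (∀ (qA : QA) (c c' d : QB → ℕ) (t : QB × Set (QA ⊕ QB) × QB) (b : ℕ),
      StepB δB t (qA, c) (qA, c') → c t.1 = 1 → d t.1 = b → 1 < b → le0 c d →
      ∃ d', iterRel (StepB δB t) b (qA, d) (qA, d') ∧ le0 c' d') := by
  constructor
  · intro qA qA' c c' d hstep hle
    rcases hstep with ⟨t, ht, h1, hg, heq⟩ | ⟨t, ht, hc, hg, heq⟩
    · -- A-transition
      have hA : qA' = t.2.2 := congrArg Prod.fst heq
      have hcc : c' = c := congrArg Prod.snd heq
      subst hA; subst hcc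
      refine ⟨d, Relation.ReflTransGen.single ?_, hle⟩
      exact Or.inl ⟨t, ht, h1, guardSat_mono qA hle.1 _ _ hg, rfl⟩
    · -- B-transition
      have hA : qA = qA' := (congrArg Prod.fst heq).symm
      subst hA
      have hcd : c' = moveB t.1 t.2.2 c := congrArg Prod.snd heq
      replace hc : 1 ≤ c t.1 := hc
      rcases eq_or_lt_of_le hc with hc1 | hc2
      · -- c t.1 = 1
        obtain ⟨d', hit, hle'⟩ := key_lemma δB t qA c c' d (d t.1)
          ⟨ht, hc, hg, heq⟩ hc1.symm rfl hle
        exact ⟨d', iterRel_rtg δA δB t _ hit, hle'⟩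
      · -- 2 ≤ c t.1
        refine ⟨moveB t.1 t.2.2 d, Relation.ReflTransGen.single
          (Or.inr ⟨t, ht, le_trans hc (hle.1 t.1), guardSat_mono qA hle.1 _ _ hg, rfl⟩),
          ?_, ?_⟩ <;> have hc2' : 2 ≤ c t.1 := hc2 <;> intro q <;>
            have h1 := hle.1 q <;> have h2 := hle.2 q <;> have h3 := hle.1 t.1 <;>
            rw [hcd] <;> simp only [moveB] <;>
            rcases eq_or_ne q t.1 with rfl | e1
        · rcases eq_or_ne t.1 t.2.2 with e2 | e2
          · simp [← e2] <;> omega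
          · simp [e2] <;> omega
        · rcases eq_or_ne q t.2.2 with rfl | e2
          · simp [e1] <;> omega
          · simp [e1, e2] <;> omega
        · rcases eq_or_ne t.1 t.2.2 with e2 | e2
          · simp [← e2] <;> omega
          · simp [e2] <;> omega
        · rcases eq_or_ne q t.2.2 with rfl | e2
          · simp [e1] <;> omega
          · simp [e1, e2] <;> omega
  · intro qA c c' d t b hsb hc1 hdb hb hle
    exact key_lemma δB t qA c c' d b hsb hc1 hdb hle
end
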